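/- Let T_{ℕ⁺} = { ∅ⁿ{p}∅^ω : n ∈ ℕ } (the traces in which p holds at exactly one position) and T₀ = { ∅^ω }. Then for every TeamLTL(⩔)-formula φ, every i ∈ ℕ, and every infinite subset T ⊆ T_{ℕ⁺}: (T,i) ⊨ φ if and only if (T ∪ T₀, i) ⊨ φ. -/
import Mathlib


set_option maxHeartbeats 1000000

universe u

/-- A trace over the set `α` of atomic propositions: an infinite sequence of
sets of propositions. -/
abbrev Trace (α : Type u) := ℕ → Set α

/-- LTL formulae in negation normal form. -/
inductive LTLForm (α : Type u) : Type u where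
  | pos : α → LTLForm α
  | neg : α → LTLForm α
  | lor : LTLForm α → LTLForm α → LTLForm α
  | land : LTLForm α → LTLForm α → LTLForm α
  | next : LTLForm α → LTLForm α
  | luntil : LTLForm α → LTLForm α → LTLForm α
  | wuntil : LTLForm α → LTLForm α → LTLForm α

namespace LTLForm
variable {α : Type u}

/-- Standard single-trace LTL semantics. -/
def sat (t : Trace α) : ℕ → LTLForm α → Prop
  | i, pos p => p ∈ t i
  | i, neg p => p ∉ t i
  | i, lor φ ψ => sat t i φ ∨ sat t i ψ
  | i, land φ ψ => sat t i φ ∧ sat t i ψ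
  | i, next φ => sat t (i+1) φ
  | i, luntil φ ψ => ∃ k, i ≤ k ∧ sat t k ψ ∧ ∀ m, i ≤ m → m < k → sat t m φ
  | i, wuntil φ ψ => ∀ k, i ≤ k → sat t k φ ∨ ∃ m, i ≤ m ∧ m ≤ k ∧ sat t m ψ

/-- Size of an LTL formula. -/
def size : LTLForm α → ℕ
  | pos _ => 1
  | neg _ => 1
  | lor φ ψ => φ.size + ψ.size + 1
  | land φ ψ => φ.size + ψ.size + 1
  | next φ => φ.size + 1
  | luntil φ ψ => φ.size + ψ.size + 1
  | wuntil φ ψ => φ.size + ψ.size + 1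

end LTLForm

/-- Extensions of `TeamLTL` by atoms and connectives:
Boolean disjunction `⩔`, Boolean negation `∼`, inclusion atoms `⊆`,
the universal subteam quantifier `A`, the singleton subteam quantifier `A¹`
and the non-emptiness atom `∼⊥`. -/
inductive TExt : Type where
  | bdis | bneg | incl | asub | asub1 | nebot
deriving DecidableEq

/-- Formulae of TeamLTL together with all the extensions considered in the paper
(fragments are carved out via `TeamForm.exts`). -/
inductive TeamForm (α : Type u) : Type u where
  | pos : α → TeamForm α
  | neg : α → TeamForm α
  | lor : TeamForm α → TeamForm α → TeamForm α
  | land : TeamForm α → TeamForm α → TeamForm α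
  | next : TeamForm α → TeamForm α
  | luntil : TeamForm α → TeamForm α → TeamForm α
  | wuntil : TeamForm α → TeamForm α → TeamForm α
  | bdis : TeamForm α → TeamForm α → TeamForm α
  | bneg : TeamForm α → TeamForm α
  | incl : List (LTLForm α × LTLForm α) → TeamForm α
  | asub : TeamForm α → TeamForm α
  | asub1 : TeamForm α → TeamForm α
  | nebot : TeamForm α

namespace TeamForm
variable {α : Type u}

/-- Synchronous team semantics for (extended) TeamLTL. -/
def sat : Set (Trace α) → ℕ → TeamForm α → Prop
  | T, i, pos p => ∀ t ∈ T, p ∈ t i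
  | T, i, neg p => ∀ t ∈ T, p ∉ t i
  | T, i, lor φ ψ => ∃ T₁ T₂, T₁ ∪ T₂ = T ∧ sat T₁ i φ ∧ sat T₂ i ψ
  | T, i, land φ ψ => sat T i φ ∧ sat T i ψ
  | T, i, next φ => sat T (i+1) φ
  | T, i, luntil φ ψ => ∃ k, i ≤ k ∧ sat T k ψ ∧ ∀ m, i ≤ m → m < k → sat T m φ
  | T, i, wuntil φ ψ => ∀ k, i ≤ k → sat T k φ ∨ ∃ m, i ≤ m ∧ m ≤ k ∧ sat T m ψ
  | T, i, bdis φ ψ => sat T i φ ∨ sat T i ψ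
  | T, i, bneg φ => ¬ sat T i φ
  | T, i, incl ps => ∀ t ∈ T, ∃ t' ∈ T, ∀ p ∈ ps, (LTLForm.sat t i p.1 ↔ LTLForm.sat t' i p.2)
  | T, i, asub φ => ∀ S, S ⊆ T → sat S i φ
  | T, i, asub1 φ => ∀ t ∈ T, sat {t} i φ
  | T, _, nebot => T.Nonempty

/-- The collection of extensions (atoms/connectives beyond core TeamLTL)
occurring in a formula. -/
def exts : TeamForm α → Set TExt
  | pos _ => ∅
  | neg _ => ∅
  | lor φ ψ => exts φ ∪ exts ψ
  | land φ ψ => exts φ ∪ exts ψ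
  | next φ => exts φ
  | luntil φ ψ => exts φ ∪ exts ψ
  | wuntil φ ψ => exts φ ∪ exts ψ
  | bdis φ ψ => insert TExt.bdis (exts φ ∪ exts ψ)
  | bneg φ => insert TExt.bneg (exts φ)
  | incl _ => {TExt.incl}
  | asub φ => insert TExt.asub (exts φ)
  | asub1 φ => insert TExt.asub1 (exts φ)
  | nebot => {TExt.nebot}

/-- Size of an (extended) TeamLTL formula. -/
def size : TeamForm α → ℕ
  | pos _ => 1
  | neg _ => 1
  | lor φ ψ => φ.size + ψ.size + 1
  | land φ ψ => φ.size + ψ.size + 1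
  | next φ => φ.size + 1
  | luntil φ ψ => φ.size + ψ.size + 1
  | wuntil φ ψ => φ.size + ψ.size + 1
  | bdis φ ψ => φ.size + ψ.size + 1
  | bneg φ => φ.size + 1
  | incl ps => (ps.map (fun p => p.1.size + p.2.size)).sum + 1
  | asub φ => φ.size + 1
  | asub1 φ => φ.size + 1
  | nebot => 1

end TeamForm

namespace Stmt16
variable {α : Type u}

/-- The trace `∅ⁿ{p}∅^ω`, in which the proposition `p` holds exactly at
position `n` (and no other proposition ever holds). -/
def tN (p : α) (n : ℕ) : Trace α := fun i => {a | a = p ∧ i = n}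

/-- The all-empty trace `∅^ω`. -/
def tZero : Trace α := fun _ => ∅

lemma tN_inj (p : α) : Function.Injective (tN p) := by
  intro m n h
  have hp : p ∈ tN p m m := ⟨rfl, rfl⟩
  rw [h] at hp
  exact hp.2

lemma pos_false {p a : α} {T : Set (Trace α)} (hT : T ⊆ Set.range (tN p))
    (hinf : T.Infinite) (i : ℕ) : ¬ ∀ t ∈ T, a ∈ t i := by
  intro h
  obtain ⟨t1, ht1, t2, ht2, hne⟩ := hinf.nontrivial
  obtain ⟨n1, rfl⟩ := hT ht1
  obtain ⟨n2, rfl⟩ := hT ht2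
  have h1 := h _ ht1
  have h2 := h _ ht2
  exact hne (congrArg (tN p) (h1.2.symm.trans h2.2))

/-- `TeamLTL(⩔)` is downward closed. -/
lemma dc : ∀ (φ : TeamForm α), φ.exts ⊆ {TExt.bdis} →
    ∀ S T : Set (Trace α), S ⊆ T → ∀ i, TeamForm.sat T i φ → TeamForm.sat S i φ := by
  intro φ
  induction φ with
  | pos a => exact fun _ S T hST i h t ht => h t (hST ht)
  | neg a => exact fun _ S T hST i h t ht => h t (hST ht)
  | lor φ ψ ihφ ihψ =>
    intro hφ S T hST i h
    obtain ⟨T₁, T₂, hun, h1, h2⟩ := h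
    refine ⟨T₁ ∩ S, T₂ ∩ S, ?_, ?_, ?_⟩
    · rw [← Set.union_inter_distrib_right, hun, Set.inter_eq_right.mpr hST]
    · exact ihφ (fun x hx => hφ (Set.mem_union_left _ hx)) _ _ Set.inter_subset_left i h1
    · exact ihψ (fun x hx => hφ (Set.mem_union_right _ hx)) _ _ Set.inter_subset_left i h2
  | land φ ψ ihφ ihψ =>
    intro hφ S T hST i h
    exact ⟨ihφ (fun x hx => hφ (Set.mem_union_left _ hx)) _ _ hST i h.1,
           ihψ (fun x hx => hφ (Set.mem_union_right _ hx)) _ _ hST i h.2⟩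
  | next φ ih => intro hφ S T hST i h; exact ih hφ _ _ hST _ h
  | luntil φ ψ ihφ ihψ =>
    intro hφ S T hST i h
    obtain ⟨k, hik, hψk, hφm⟩ := h
    exact ⟨k, hik, ihψ (fun x hx => hφ (Set.mem_union_right _ hx)) _ _ hST _ hψk,
      fun m h1 h2 => ihφ (fun x hx => hφ (Set.mem_union_left _ hx)) _ _ hST _ (hφm m h1 h2)⟩
  | wuntil φ ψ ihφ ihψ =>
    intro hφ S T hST i h k hik
    rcases h k hik with h' | ⟨m, h1, h2, h3⟩
    · exact Or.inl (ihφ (fun x hx => hφ (Set.mem_union_left _ hx)) _ _ hST _ h')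
    · exact Or.inr ⟨m, h1, h2, ihψ (fun x hx => hφ (Set.mem_union_right _ hx)) _ _ hST _ h3⟩
  | bdis φ ψ ihφ ihψ =>
    intro hφ S T hST i h
    exact h.imp
      (ihφ (fun x hx => hφ (Set.mem_insert_of_mem _ (Set.mem_union_left _ hx))) _ _ hST i)
      (ihψ (fun x hx => hφ (Set.mem_insert_of_mem _ (Set.mem_union_right _ hx))) _ _ hST i)
  | bneg φ ih => exact fun hφ => absurd (hφ (Set.mem_insert _ _)) (by simp)
  | incl ps => exact fun hφ => absurd (hφ rfl) (by simp)
  | asub φ ih => exact fun hφ => absurd (hφ (Set.mem_insert _ _)) (by simp)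
  | asub1 φ ih => exact fun hφ => absurd (hφ (Set.mem_insert _ _)) (by simp)
  | nebot => exact fun hφ => absurd (hφ rfl) (by simp)

lemma fwd (p : α) : ∀ (φ : TeamForm α), φ.exts ⊆ {TExt.bdis} →
    ∀ T : Set (Trace α), T ⊆ Set.range (tN p) → T.Infinite → ∀ i,
    TeamForm.sat T i φ → TeamForm.sat (T ∪ {tZero}) i φ := by
  intro φ
  induction φ with
  | pos a => exact fun _ T hT hinf i h => absurd h (pos_false hT hinf i)
  | neg a =>
    intro _ T hT hinf i h t ht
    rcases ht with ht | ht
    · exact h t ht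
    · rw [ht]; exact fun hc => hc
  | lor φ ψ ihφ ihψ =>
    intro hφ T hT hinf i h
    obtain ⟨T₁, T₂, hun, h1, h2⟩ := h
    have hinf' : T₁.Infinite ∨ T₂.Infinite := by
      rw [← Set.infinite_union, hun]; exact hinf
    rcases hinf' with h' | h'
    · refine ⟨T₁ ∪ {tZero}, T₂, ?_, ?_, h2⟩
      · rw [Set.union_right_comm, hun]
      · exact ihφ (fun x hx => hφ (Set.mem_union_left _ hx)) T₁
          (fun x hx => hT (hun ▸ Set.mem_union_left _ hx)) h' i h1
    · refine ⟨T₁, T₂ ∪ {tZero}, ?_, h1, ?_⟩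
      · rw [← Set.union_assoc, hun]
      · exact ihψ (fun x hx => hφ (Set.mem_union_right _ hx)) T₂
          (fun x hx => hT (hun ▸ Set.mem_union_right _ hx)) h' i h2
  | land φ ψ ihφ ihψ =>
    intro hφ T hT hinf i h
    exact ⟨ihφ (fun x hx => hφ (Set.mem_union_left _ hx)) T hT hinf i h.1,
           ihψ (fun x hx => hφ (Set.mem_union_right _ hx)) T hT hinf i h.2⟩
  | next φ ih => intro hφ T hT hinf i h; exact ih hφ T hT hinf _ h
  | luntil φ ψ ihφ ihψ =>
    intro hφ T hT hinf i h
    obtain ⟨k, hik, hψk, hφm⟩ := h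
    exact ⟨k, hik, ihψ (fun x hx => hφ (Set.mem_union_right _ hx)) T hT hinf _ hψk,
      fun m h1 h2 => ihφ (fun x hx => hφ (Set.mem_union_left _ hx)) T hT hinf _ (hφm m h1 h2)⟩
  | wuntil φ ψ ihφ ihψ =>
    intro hφ T hT hinf i h k hik
    rcases h k hik with h' | ⟨m, h1, h2, h3⟩
    · exact Or.inl (ihφ (fun x hx => hφ (Set.mem_union_left _ hx)) T hT hinf _ h')
    · exact Or.inr ⟨m, h1, h2, ihψ (fun x hx => hφ (Set.mem_union_right _ hx)) T hT hinf _ h3⟩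
  | bdis φ ψ ihφ ihψ =>
    intro hφ T hT hinf i h
    exact h.imp
      (ihφ (fun x hx => hφ (Set.mem_insert_of_mem _ (Set.mem_union_left _ hx))) T hT hinf i)
      (ihψ (fun x hx => hφ (Set.mem_insert_of_mem _ (Set.mem_union_right _ hx))) T hT hinf i)
  | bneg φ ih => exact fun hφ => absurd (hφ (Set.mem_insert _ _)) (by simp)
  | incl ps => exact fun hφ => absurd (hφ rfl) (by simp)
  | asub φ ih => exact fun hφ => absurd (hφ (Set.mem_insert _ _)) (by simp)
  | asub1 φ ih => exact fun hφ => absurd (hφ (Set.mem_insert _ _)) (by simp)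
  | nebot => exact fun hφ => absurd (hφ rfl) (by simp)

/-- For every `TeamLTL(⩔)`-formula `φ`, every `i ∈ ℕ`, and every
infinite subset `T ⊆ T_{ℕ⁺} = {∅ⁿ{p}∅^ω : n ∈ ℕ}`:
`(T,i) ⊨ φ` iff `(T ∪ T₀, i) ⊨ φ`, where `T₀ = {∅^ω}`. -/
theorem stmt_16 (p : α) (φ : TeamForm α) (hφ : φ.exts ⊆ {TExt.bdis})
    (i : ℕ) (T : Set (Trace α)) (hT : T ⊆ Set.range (tN p)) (hinf : T.Infinite) :
    TeamForm.sat T i φ ↔ TeamForm.sat (T ∪ {tZero}) i φ := by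
  constructor
  · exact fwd p φ hφ T hT hinf i
  · exact dc φ hφ T (T ∪ {tZero}) Set.subset_union_left i

end Stmt16
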